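/- The minimum over all probability distributions Q on a finite alphabet X of D(Q‖P₁)+D(Q‖P₂) is attained at the normalized geometric mean Q*(x) = √(P₁(x)P₂(x)) / ∑_y √(P₁(y)P₂(y)), and its value equals −2 log ∑_x √(P₁(x)P₂(x)), i.e., the Rényi divergence of order 1/2 between P₁ and P₂. -/

import Mathlib

open scoped BigOperators

noncomputable section

variable {X : Type*}

/-- `p` is a probability mass function on the finite alphabet `X`. -/
def IsProbVec [Fintype X] (p : X → ℝ) : Prop := (∀ x, 0 ≤ p x) ∧ ∑ x, p x = 1

/-- One term of the KL divergence, with the conventions `0 · log (0/q) = 0` and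
`p · log (p/0) = +∞` for `p > 0`. -/
def klTerm (p q : ℝ) : EReal :=
  if p = 0 then 0 else if q = 0 then ⊤ else ((p * Real.log (p / q) : ℝ) : EReal)

/-- Kullback–Leibler divergence `D(P‖Q)` on a finite alphabet, valued in `EReal`. -/
def KL [Fintype X] (P Q : X → ℝ) : EReal := ∑ x, klTerm (P x) (Q x)

/-- Generalized Jensen–Shannon divergence. -/
def GJS [Fintype X] (P Q : X → ℝ) : EReal :=
  KL P (fun x => (P x + Q x) / 2) + KL Q (fun x => (P x + Q x) / 2)

variable [Fintype X]

/-- The exponent function `η(P₁,P₂)`: infimum of `D(Q₁‖P₁)+D(Q₂‖P₂)+D(Q₃‖P₂)` over triples of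
distributions with `f(Q₁,Q₂) ≤ f(Q₃,Q₂)`. -/
def eta (f : (X → ℝ) → (X → ℝ) → ℝ) (P₁ P₂ : X → ℝ) : EReal :=
  ⨅ t : {t : (X → ℝ) × (X → ℝ) × (X → ℝ) //
      IsProbVec t.1 ∧ IsProbVec t.2.1 ∧ IsProbVec t.2.2 ∧ f t.1 t.2.1 ≤ f t.2.2 t.2.1},
    KL t.1.1 P₁ + KL t.1.2.1 P₂ + KL t.1.2.2 P₂

/-- The exponent function `Ω(P₁,P₂,λ)`: infimum of `D(Q₁‖P₁)+D(Q₂‖P₂)` over pairs of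
distributions with `f(Q₁,Q₂) ≤ λ`. -/
def Omega (f : (X → ℝ) → (X → ℝ) → ℝ) (P₁ P₂ : X → ℝ) (lam : ℝ) : EReal :=
  ⨅ t : {t : (X → ℝ) × (X → ℝ) // IsProbVec t.1 ∧ IsProbVec t.2 ∧ f t.1 t.2 ≤ lam},
    KL t.1.1 P₁ + KL t.1.2 P₂

/-- The exponent function `Υ(P,λ)`: infimum of `D(Q₁‖P)+D(Q₂‖P)` over pairs of distributions
with `f(Q₁,Q₂) ≥ λ` (the infimum over the empty set being `+∞`). -/
def Upsilon (f : (X → ℝ) → (X → ℝ) → ℝ) (P : X → ℝ) (lam : ℝ) : EReal :=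
  ⨅ t : {t : (X → ℝ) × (X → ℝ) // IsProbVec t.1 ∧ IsProbVec t.2 ∧ lam ≤ f t.1 t.2},
    KL t.1.1 P + KL t.1.2 P

/-- The exponent function `γ(P₁,P₂)`: infimum of `D(Q₁‖P₁)+D(Q₂‖P₁)+D(Q₃‖P₂)` over triples of
distributions with `f(Q₁,Q₃) ≤ f(Q₁,Q₂)`. -/
def gammaExp (f : (X → ℝ) → (X → ℝ) → ℝ) (P₁ P₂ : X → ℝ) : EReal :=
  ⨅ t : {t : (X → ℝ) × (X → ℝ) × (X → ℝ) //
      IsProbVec t.1 ∧ IsProbVec t.2.1 ∧ IsProbVec t.2.2 ∧ f t.1 t.2.2 ≤ f t.1 t.2.1},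
    KL t.1.1 P₁ + KL t.1.2.1 P₁ + KL t.1.2.2 P₂

/-- `min_Q D(Q‖P₁)+D(Q‖P₂)`, i.e. `Ω(P₁,P₂,0)` for a scoring function vanishing exactly on
the diagonal. -/
def OmegaZero (P₁ P₂ : X → ℝ) : EReal :=
  ⨅ Q : {q : X → ℝ // IsProbVec q}, KL Q.1 P₁ + KL Q.1 P₂

/-! Writing `G` for the normalized geometric mean of `P₁` and `P₂` and `S = ∑ √(P₁ P₂)`, one has
`log (Q/P₁) + log (Q/P₂) = 2 log (Q/G) - 2 log S` pointwise, hence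
`D(Q‖P₁) + D(Q‖P₂) = 2 D(Q‖G) - 2 log S` for every distribution `Q` (both sides being `⊤` when `Q`
charges a point outside the common support). Gibbs' inequality `D(Q‖G) ≥ 0`, with equality at
`Q = G`, then identifies the minimum. -/

theorem EReal.coe_finset_sum {ι : Type*} (s : Finset ι) (f : ι → ℝ) :
    ((∑ i ∈ s, f i : ℝ) : EReal) = ∑ i ∈ s, (f i : EReal) :=
  map_sum (⟨⟨Real.toEReal, EReal.coe_zero⟩, EReal.coe_add⟩ : ℝ →+ EReal) f s

def bhattacharyya (P₁ P₂ : X → ℝ) : ℝ := ∑ x, Real.sqrt (P₁ x * P₂ x)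

def geomMeanDist (P₁ P₂ : X → ℝ) (x : X) : ℝ :=
  Real.sqrt (P₁ x * P₂ x) / bhattacharyya P₁ P₂

theorem isProbVec_geomMeanDist {P₁ P₂ : X → ℝ} (h : 0 < bhattacharyya P₁ P₂) :
    IsProbVec (geomMeanDist P₁ P₂) :=
  ⟨fun _ => div_nonneg (Real.sqrt_nonneg _) h.le, by
    simp only [geomMeanDist, ← Finset.sum_div]
    exact div_self h.ne'⟩

theorem klTerm_ne_bot (p q : ℝ) : klTerm p q ≠ ⊥ := by
  unfold klTerm
  split_ifs
  exacts [EReal.zero_ne_bot, top_ne_bot, EReal.coe_ne_bot _]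

theorem klTerm_self (p : ℝ) : klTerm p p = 0 := by
  by_cases hp : p = 0 <;> simp [klTerm, hp]

theorem coe_sub_le_klTerm {q r : ℝ} (hq : 0 ≤ q) (hr : 0 ≤ r) :
    ((q - r : ℝ) : EReal) ≤ klTerm q r := by
  rcases hq.eq_or_lt with rfl | hq
  · simpa [klTerm] using hr
  rcases hr.eq_or_lt with rfl | hr
  · simp [klTerm, hq.ne']
  have hlog : 1 - r / q ≤ Real.log (q / r) := by
    simpa using Real.one_sub_inv_le_log_of_pos (div_pos hq hr)
  simp only [klTerm, hq.ne', hr.ne', if_false, EReal.coe_le_coe_iff]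
  calc q - r = q * (1 - r / q) := by field_simp
    _ ≤ q * Real.log (q / r) := mul_le_mul_of_nonneg_left hlog hq.le

theorem KL_self (Q : X → ℝ) : KL Q Q = 0 := by
  simp [KL, klTerm_self]

theorem KL_nonneg {Q R : X → ℝ} (hQ : IsProbVec Q) (hR : IsProbVec R) : 0 ≤ KL Q R :=
  calc (0 : EReal) = ((∑ x, (Q x - R x) : ℝ) : EReal) := by
        rw [Finset.sum_sub_distrib, hQ.2, hR.2, sub_self, EReal.coe_zero]
    _ = ∑ x, ((Q x - R x : ℝ) : EReal) := EReal.coe_finset_sum _ _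
    _ ≤ KL Q R := Finset.sum_le_sum fun x _ => coe_sub_le_klTerm (hQ.1 x) (hR.1 x)

theorem klTerm_add_klTerm_eq_klTerm_sqrt_mul_div {q p₁ p₂ S : ℝ} (hp₁ : 0 ≤ p₁) (hp₂ : 0 ≤ p₂)
    (hS : 0 < S) :
    klTerm q p₁ + klTerm q p₂ = klTerm q (Real.sqrt (p₁ * p₂) / S) +
      klTerm q (Real.sqrt (p₁ * p₂) / S) + ((-2 * Real.log S * q : ℝ) : EReal) := by
  by_cases hq : q = 0
  · simp [klTerm, hq]
  have hq_zero : klTerm q 0 = ⊤ := by simp [klTerm, hq]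
  rcases hp₁.eq_or_lt with rfl | hp₁
  · rw [zero_mul, Real.sqrt_zero, zero_div, hq_zero, EReal.top_add_of_ne_bot (klTerm_ne_bot _ _),
      EReal.top_add_top, EReal.top_add_of_ne_bot (EReal.coe_ne_bot _)]
  rcases hp₂.eq_or_lt with rfl | hp₂
  · rw [mul_zero, Real.sqrt_zero, zero_div, hq_zero, EReal.add_top_of_ne_bot (klTerm_ne_bot _ _),
      EReal.top_add_top, EReal.top_add_of_ne_bot (EReal.coe_ne_bot _)]
  have hr : Real.sqrt (p₁ * p₂) / S ≠ 0 := by positivity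
  have hlog_r : Real.log (Real.sqrt (p₁ * p₂) / S) =
      (Real.log p₁ + Real.log p₂) / 2 - Real.log S := by
    rw [Real.log_div (by positivity) hS.ne', Real.log_sqrt (by positivity),
      Real.log_mul hp₁.ne' hp₂.ne']
  simp only [klTerm, hq, hp₁.ne', hp₂.ne', hr, if_false, ← EReal.coe_add, EReal.coe_eq_coe_iff]
  rw [Real.log_div hq hp₁.ne', Real.log_div hq hp₂.ne', Real.log_div hq hr, hlog_r]
  ring

theorem KL_add_KL_eq_KL_geomMeanDist {P₁ P₂ : X → ℝ} (hP₁ : ∀ x, 0 ≤ P₁ x) (hP₂ : ∀ x, 0 ≤ P₂ x)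
    (h : 0 < bhattacharyya P₁ P₂) (Q : X → ℝ) :
    KL Q P₁ + KL Q P₂ = KL Q (geomMeanDist P₁ P₂) + KL Q (geomMeanDist P₁ P₂) +
      ((-2 * Real.log (bhattacharyya P₁ P₂) * ∑ x, Q x : ℝ) : EReal) := by
  simp only [KL, ← Finset.sum_add_distrib, Finset.mul_sum, EReal.coe_finset_sum]
  exact Finset.sum_congr rfl fun x _ =>
    klTerm_add_klTerm_eq_klTerm_sqrt_mul_div (hP₁ x) (hP₂ x) h

theorem OmegaZero_eq_renyi_half_general (P₁ P₂ : X → ℝ)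
    (hP₁ : IsProbVec P₁) (hP₂ : IsProbVec P₂)
    (hpos : 0 < ∑ x, Real.sqrt (P₁ x * P₂ x)) :
    IsProbVec (fun x => Real.sqrt (P₁ x * P₂ x) / ∑ y, Real.sqrt (P₁ y * P₂ y)) ∧
    KL (fun x => Real.sqrt (P₁ x * P₂ x) / ∑ y, Real.sqrt (P₁ y * P₂ y)) P₁ +
      KL (fun x => Real.sqrt (P₁ x * P₂ x) / ∑ y, Real.sqrt (P₁ y * P₂ y)) P₂ =
        ((-2 * Real.log (∑ x, Real.sqrt (P₁ x * P₂ x)) : ℝ) : EReal) ∧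
    OmegaZero P₁ P₂ = ((-2 * Real.log (∑ x, Real.sqrt (P₁ x * P₂ x)) : ℝ) : EReal) := by
  change 0 < bhattacharyya P₁ P₂ at hpos
  change IsProbVec (geomMeanDist P₁ P₂) ∧
    KL (geomMeanDist P₁ P₂) P₁ + KL (geomMeanDist P₁ P₂) P₂ =
      ((-2 * Real.log (bhattacharyya P₁ P₂) : ℝ) : EReal) ∧
    OmegaZero P₁ P₂ = ((-2 * Real.log (bhattacharyya P₁ P₂) : ℝ) : EReal)
  have hG := isProbVec_geomMeanDist hpos
  have hdecomp := KL_add_KL_eq_KL_geomMeanDist hP₁.1 hP₂.1 hpos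
  have hattained : KL (geomMeanDist P₁ P₂) P₁ + KL (geomMeanDist P₁ P₂) P₂ =
      ((-2 * Real.log (bhattacharyya P₁ P₂) : ℝ) : EReal) := by
    rw [hdecomp, KL_self, hG.2, mul_one, add_zero, zero_add]
  refine ⟨hG, hattained, le_antisymm ((iInf_le _ ⟨_, hG⟩).trans_eq hattained) ?_⟩
  refine le_iInf fun ⟨Q, hQ⟩ => ?_
  rw [hdecomp, hQ.2, mul_one]
  have hgibbs := KL_nonneg hQ hG
  exact le_add_of_nonneg_left (add_nonneg hgibbs hgibbs)

/-- `min_Q D(Q‖P₁)+D(Q‖P₂)` is attained at the normalized geometric mean and equals the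
Rényi divergence of order `1/2`, `−2 log ∑_x √(P₁(x)P₂(x))`. -/
theorem OmegaZero_eq_renyi_half [Nonempty X] (P₁ P₂ : X → ℝ)
    (hP₁ : IsProbVec P₁) (hP₂ : IsProbVec P₂)
    (hpos : 0 < ∑ x, Real.sqrt (P₁ x * P₂ x)) :
    IsProbVec (fun x => Real.sqrt (P₁ x * P₂ x) / ∑ y, Real.sqrt (P₁ y * P₂ y)) ∧
    KL (fun x => Real.sqrt (P₁ x * P₂ x) / ∑ y, Real.sqrt (P₁ y * P₂ y)) P₁ +
      KL (fun x => Real.sqrt (P₁ x * P₂ x) / ∑ y, Real.sqrt (P₁ y * P₂ y)) P₂ =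
        ((-2 * Real.log (∑ x, Real.sqrt (P₁ x * P₂ x)) : ℝ) : EReal) ∧
    OmegaZero P₁ P₂ = ((-2 * Real.log (∑ x, Real.sqrt (P₁ x * P₂ x)) : ℝ) : EReal) :=
  OmegaZero_eq_renyi_half_general P₁ P₂ hP₁ hP₂ hpos
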